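/- (Stability of vector normalization under entrywise perturbation, Lemma) Let M be a positive integer, let ε ∈ [0, 1/(2√M)], and let p, f ∈ ℝ^M satisfy max_j |p_j − f_j| ≤ ε and ‖f‖₂ = 1 (Euclidean norm). Then p ≠ 0 and ‖p/‖p‖₂ − f‖₂ ≤ 4√M·ε. -/

import Mathlib

open scoped Real

noncomputable section

/-- **Stability of vector normalization under entrywise perturbation (Lemma).** -/
theorem normalization_stability
    (M : ℕ) (hM : 0 < M) (ε : ℝ)
    (hε : ε ∈ Set.Icc 0 (1 / (2 * Real.sqrt M)))
    (p f : EuclideanSpace ℝ (Fin M))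
    (hpf : ∀ j, |p j - f j| ≤ ε)
    (hf : ‖f‖ = 1) :
    p ≠ 0 ∧ ‖(‖p‖)⁻¹ • p - f‖ ≤ 4 * Real.sqrt M * ε := by
  obtain ⟨hε0, hε1⟩ := hε
  have hsM : (0:ℝ) < Real.sqrt M := Real.sqrt_pos.mpr (by exact_mod_cast hM)
  have hd : ‖p - f‖ ≤ Real.sqrt M * ε := by
    have : ‖p - f‖ ≤ Real.sqrt ((M : ℝ) * ε ^ 2) := by
      rw [EuclideanSpace.norm_eq]
      apply Real.sqrt_le_sqrt
      calc ∑ j, ‖(p - f) j‖ ^ 2 ≤ ∑ _j : Fin M, ε ^ 2 := by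
            apply Finset.sum_le_sum
            intro j _
            have : ‖(p - f) j‖ ≤ ε := by
              simpa [Real.norm_eq_abs] using hpf j
            exact pow_le_pow_left₀ (norm_nonneg _) this 2
        _ = (M : ℝ) * ε ^ 2 := by simp [mul_comm]
    calc ‖p - f‖ ≤ Real.sqrt ((M : ℝ) * ε ^ 2) := this
      _ = Real.sqrt M * ε := by
          rw [Real.sqrt_mul (by positivity), Real.sqrt_sq hε0]
  have hMε : Real.sqrt M * ε ≤ 1 / 2 := by
    calc Real.sqrt M * ε ≤ Real.sqrt M * (1 / (2 * Real.sqrt M)) :=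
          mul_le_mul_of_nonneg_left hε1 hsM.le
      _ = 1 / 2 := by field_simp
  have hpd : ‖p - f‖ ≤ 1 / 2 := hd.trans hMε
  have hpn : (1:ℝ)/2 ≤ ‖p‖ := by
    nlinarith [norm_sub_norm_le f p, norm_sub_rev p f, norm_sub_rev f p, abs_norm_sub_norm_le f p, abs_le.mp (abs_norm_sub_norm_le f p)]
  have hp0 : p ≠ 0 := by
    intro h
    rw [h, norm_zero] at hpn; linarith
  refine ⟨hp0, ?_⟩
  have hpos : (0:ℝ) < ‖p‖ := lt_of_lt_of_le (by norm_num) hpn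
  have h1 : ‖(‖p‖)⁻¹ • p - p‖ = |1 - ‖p‖| := by
    have : (‖p‖)⁻¹ • p - p = ((‖p‖)⁻¹ - 1) • p := by
      rw [sub_smul, one_smul]
    rw [this, norm_smul, Real.norm_eq_abs]
    rw [abs_sub_comm, show (1:ℝ) - (‖p‖)⁻¹ = (‖p‖ - 1) / ‖p‖ by field_simp, abs_div,
      abs_of_pos hpos, div_mul_cancel₀ _ hpos.ne', abs_sub_comm]
  have h2 : |1 - ‖p‖| ≤ ‖p - f‖ := by
    have := abs_norm_sub_norm_le f p
    rw [norm_sub_rev, hf] at this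
    exact this
  calc ‖(‖p‖)⁻¹ • p - f‖ ≤ ‖(‖p‖)⁻¹ • p - p‖ + ‖p - f‖ := by
        have := norm_sub_le_norm_sub_add_norm_sub ((‖p‖)⁻¹ • p) p f
        simpa using this
    _ ≤ ‖p - f‖ + ‖p - f‖ := by rw [h1]; linarith
    _ ≤ 2 * (Real.sqrt M * ε) := by linarith
    _ ≤ 4 * Real.sqrt M * ε := by nlinarith [mul_nonneg hsM.le hε0]
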